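/- arXiv:2404.09945 — 3 statements merged into one kernel-verified Lean document; each statement's English description precedes it below -/
import Mathlib

section
/- Let R be a commutative ring, I ⊆ R an ideal with I² = 0, A a commutative ring equipped with an action of a finite group Σ by ring automorphisms, and suppose the order |Σ| is invertible in R. Let f : A → R be a ring homomorphism such that f(σ(a)) − f(a) ∈ I for all a ∈ A and σ ∈ Σ. Then the averaged map f̃ : A → R defined by f̃(a) = |Σ|⁻¹ · Σ_{σ∈Σ} f(σ(a)) is a ring homomorphism, satisfies f̃(σ(a)) = f̃(a) for all σ ∈ Σ and a ∈ A, and agrees with f modulo I. -/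
/-- Averaging a ring homomorphism over a finite group action, when the discrepancies lie
in a square-zero ideal and the group order is invertible, yields an invariant ring
homomorphism agreeing with the original one modulo the ideal. -/
theorem averaged_ringHom_exists
    {R A Γ : Type*} [CommRing R] [CommRing A] [Group Γ] [Fintype Γ]
    [MulSemiringAction Γ A]
    (I : Ideal R) (hI : ∀ x ∈ I, ∀ y ∈ I, x * y = 0)
    (c : R) (hc : c * (Fintype.card Γ : R) = 1)
    (f : A →+* R) (hf : ∀ (σ : Γ) (a : A), f (σ • a) - f a ∈ I) :
    ∃ g : A →+* R,
      (∀ a : A, g a = c * ∑ σ : Γ, f (σ • a)) ∧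
      (∀ (σ : Γ) (a : A), g (σ • a) = g a) ∧
      (∀ a : A, g a - f a ∈ I) := by
  set S : A → R := fun a => ∑ σ : Γ, (f (σ • a) - f a) with hSdef
  have hS : ∀ a, S a ∈ I := fun a => Ideal.sum_mem I (fun σ _ => hf σ a)
  have hsum : ∀ a : A, ∑ σ : Γ, f (σ • a) = (Fintype.card Γ : R) * f a + S a := by
    intro a
    simp only [hSdef, Finset.sum_sub_distrib, Finset.sum_const, Finset.card_univ,
      nsmul_eq_mul]
    ring
  have key : ∀ (σ : Γ) (a b : A), f (σ • (a * b)) =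
      f a * f b + f a * (f (σ • b) - f b) + f b * (f (σ • a) - f a) := by
    intro σ a b
    have h0 : (f (σ • a) - f a) * (f (σ • b) - f b) = 0 := hI _ (hf σ a) _ (hf σ b)
    have h1 : f (σ • (a * b)) = f (σ • a) * f (σ • b) := by rw [smul_mul']; exact map_mul f _ _
    rw [h1]; linear_combination h0
  refine ⟨{ toFun := fun a => c * ∑ σ : Γ, f (σ • a)
            map_one' := ?_
            map_mul' := ?_
            map_zero' := ?_
            map_add' := ?_ }, fun a => rfl, ?_, ?_⟩
  · simp [smul_one, Finset.sum_const, Finset.card_univ, nsmul_eq_mul, hc]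
  · intro a b
    have hSS : S a * S b = 0 := hI _ (hS a) _ (hS b)
    have h2 : ∑ σ : Γ, f (σ • (a * b)) =
        (Fintype.card Γ : R) * (f a * f b) + f a * S b + f b * S a := by
      simp only [hSdef]
      rw [Finset.sum_congr rfl (fun σ _ => key σ a b)]
      simp only [Finset.sum_add_distrib, Finset.sum_const, Finset.card_univ, nsmul_eq_mul,
        ← Finset.mul_sum]
    simp only [h2, hsum a, hsum b]
    linear_combination (-(c * (Fintype.card Γ : R) * f a * f b) - c * f a * S b
      - c * f b * S a) * hc + (-(c * c)) * hSS
  · simp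
  · intro a b
    simp only [smul_add, map_add, Finset.sum_add_distrib, mul_add]
  · intro τ a
    simp only [RingHom.coe_mk, MonoidHom.coe_mk, OneHom.coe_mk]
    congr 1
    exact Fintype.sum_equiv (Equiv.mulRight τ) _ _ (fun σ => by simp [mul_smul])
  · intro a
    have h3 : c * (∑ σ : Γ, f (σ • a)) - f a = c * S a := by
      rw [hsum a]; linear_combination (f a) * hc
    simpa [h3] using I.mul_mem_left c (hS a)
end

section
/- Let O be a discrete valuation ring with fraction field F, V a finite-dimensional F-vector space with a nondegenerate symmetric F-bilinear form, and for a full O-lattice L ⊆ V let L∨ = {v ∈ V : (v, L) ⊆ O} denote its dual lattice. If L ⊆ M are full O-lattices in V with M ⊆ M∨ ⊆ L∨, then 2 · length_O(M/L) = length_O(L∨/L) − length_O(M∨/M). -/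
/-- Length of a module, as the Krull dimension of its lattice of submodules. -/
noncomputable def moduleLength (R M : Type*) [Ring R] [AddCommGroup M] [Module R M] :
    WithBot ℕ∞ :=
  Order.krullDim (Submodule R M)

/-! Dualizing is an inclusion-reversing involution on the lattices between `L` and `L∨`, so it
maps the interval `[L, M]` anti-isomorphically onto `[M∨, L∨]`. Since the submodules of a
subquotient `N/L` form the interval `[L, N]`, this gives `length(L∨/M∨) = length(M/L)`, and the
theorem is additivity of length along the chain `L ⊆ M ⊆ M∨ ⊆ L∨`. -/

open Submodule
open LinearMap (BilinForm)

section Subquotient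

variable {R X : Type*} [Ring R] [AddCommGroup X] [Module R X]

def Submodule.subquotientOrderIso {L N : Submodule R X} (h : L ≤ N) :
    Submodule R (N ⧸ L.comap N.subtype) ≃o Set.Icc L N :=
  (comapMkQRelIso _).trans
    { toFun q := ⟨q.1.map N.subtype,
        by simpa [map_comap_subtype, h] using map_mono (f := N.subtype) q.2, map_subtype_le _ _⟩
      invFun x := ⟨x.1.comap N.subtype, comap_mono x.2.1⟩
      left_inv q := Subtype.ext (comap_map_eq_of_injective N.injective_subtype _)
      right_inv x := Subtype.ext (by simpa [map_comap_subtype] using x.2.2)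
      map_rel_iff' := map_le_map_iff_of_injective N.injective_subtype _ _ }

lemma Module.length_subquotient_eq_add {L M N : Submodule R X} (hLM : L ≤ M) (hMN : M ≤ N) :
    Module.length R (N ⧸ L.comap N.subtype) =
      Module.length R (M ⧸ L.comap M.subtype) + Module.length R (N ⧸ M.comap N.subtype) := by
  refine Module.length_eq_add_of_exact
    ((L.comap M.subtype).mapQ (L.comap N.subtype) (inclusion hMN)
      (by rw [← comap_comp, subtype_comp_inclusion]))
    ((L.comap N.subtype).mapQ (M.comap N.subtype) LinearMap.id (comap_mono hLM)) ?_ ?_ ?_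
  · rw [← LinearMap.ker_eq_bot, ker_mapQ]
    exact mkQ_map_self _
  · rw [← LinearMap.range_eq_top, range_mapQ, LinearMap.range_id, Submodule.map_top, range_mkQ]
  · rw [LinearMap.exact_iff, ker_mapQ, range_mapQ, range_inclusion, comap_id]

lemma Module.length_subquotient_eq_of_orderIso_dual {L N L' N' : Submodule R X} (h : L ≤ N)
    (h' : L' ≤ N') (e : Set.Icc L N ≃o (Set.Icc L' N')ᵒᵈ) :
    Module.length R (N ⧸ L.comap N.subtype) = Module.length R (N' ⧸ L'.comap N'.subtype) := by
  apply WithBot.coe_injective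
  rw [Module.coe_length, Module.coe_length, Order.krullDim_eq_of_orderIso (subquotientOrderIso h),
    Order.krullDim_eq_of_orderIso (subquotientOrderIso h'), Order.krullDim_eq_of_orderIso e,
    Order.krullDim_orderDual]

end Subquotient

def Set.Icc.orderIsoDualOfAntitone {α : Type*} [PartialOrder α] {D : α → α} (hD : Antitone D)
    {a b : α} (hab : a ≤ b) (hb : b ≤ D b)
    (hDD : ∀ x, a ≤ x → x ≤ D a → D (D x) = x) :
    Set.Icc a b ≃o (Set.Icc (D b) (D a))ᵒᵈ :=
  have hbDa : b ≤ D a := hb.trans (hD hab)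
  { toFun x := OrderDual.toDual ⟨D x, hD x.2.2, hD x.2.1⟩
    invFun y := ⟨D y.1, (hDD a le_rfl (hab.trans hbDa)).ge.trans (hD y.2.2),
      (hD y.2.1).trans (hDD b hab hbDa).le⟩
    left_inv x := Subtype.ext (hDD x x.2.1 (x.2.2.trans hbDa))
    right_inv y := Subtype.ext (hDD y.1 (hab.trans (hb.trans y.2.1)) y.2.2)
    map_rel_iff' {x y} := by
      refine ⟨fun h ↦ ?_, fun h ↦ hD h⟩
      have h' : D (D x) ≤ D (D y) := hD (show D y ≤ D x from h)
      rwa [hDD x x.2.1 (x.2.2.trans hbDa), hDD y y.2.1 (y.2.2.trans hbDa)] at h' }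

section DualLattice

variable {R K V : Type*} [CommRing R] [Field K] [Algebra R K]
  [AddCommGroup V] [Module K V] [Module R V] [IsScalarTower R K V]

lemma LinearMap.BilinForm.dualSubmodule_antitone (B : BilinForm K V) :
    Antitone (B.dualSubmodule (R := R)) :=
  fun _ _ h _ hx y hy ↦ hx y (h hy)

lemma LinearMap.BilinForm.mem_dualSubmodule_iff_mem_range (B : BilinForm K V) {N : Submodule R V}
    {x : V} : x ∈ B.dualSubmodule N ↔ ∀ y ∈ N, B x y ∈ Set.range (algebraMap R K) := by
  simp only [BilinForm.mem_dualSubmodule, Submodule.mem_one, Set.mem_range]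

variable [IsFractionRing R K]

lemma Module.Basis.span_range_extendOfIsLattice {κ : Type*} {M : Submodule R V} [IsLattice K M]
    (b : Module.Basis κ R M) : span R (Set.range (b.extendOfIsLattice K)) = M := by
  have : (b.extendOfIsLattice K : κ → V) = M.subtype ∘ b := funext fun i ↦ by simp
  rw [this, Set.range_comp, ← map_span, b.span_eq, Submodule.map_top, range_subtype]

variable [IsDomain R] [IsPrincipalIdealRing R] (B : BilinForm K V)

lemma LinearMap.BilinForm.dualSubmodule_dualSubmodule_of_isLattice (hB : B.Nondegenerate)
    (hB' : B.IsSymm) (M : Submodule R V) [IsLattice K M] :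
    B.dualSubmodule (B.dualSubmodule M) = M := by
  rw [← (Module.Free.chooseBasis R M).span_range_extendOfIsLattice (K := K)]
  exact B.dualSubmodule_dualSubmodule_of_basis hB hB' _

lemma LinearMap.BilinForm.isLattice_dualSubmodule (hB : B.Nondegenerate) (M : Submodule R V)
    [IsLattice K M] : IsLattice K (B.dualSubmodule M) := by
  classical
  rw [← (Module.Free.chooseBasis R M).span_range_extendOfIsLattice (K := K),
    B.dualSubmodule_span_of_basis hB]
  refine ⟨fg_span (Set.finite_range _), ?_⟩
  rw [span_span_of_tower, (B.dualBasis hB _).span_eq]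

end DualLattice

theorem two_mul_length_eq_length_dual_sub_general
    {O F V : Type*} [CommRing O] [IsDomain O] [IsDiscreteValuationRing O]
    [Field F] [Algebra O F] [IsFractionRing O F]
    [AddCommGroup V] [Module F V]
    [Module O V] [IsScalarTower O F V]
    (B : V →ₗ[F] V →ₗ[F] F)
    (hsymm : ∀ x y, B x y = B y x)
    (hnondeg : ∀ x, (∀ y, B x y = 0) → x = 0)
    (L M Ld Md : Submodule O V)
    (hLfull : L.FG ∧ Submodule.span F (L : Set V) = ⊤)
    (hLd : ∀ v : V, v ∈ Ld ↔ ∀ x ∈ L, B v x ∈ Set.range (algebraMap O F))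
    (hMd : ∀ v : V, v ∈ Md ↔ ∀ x ∈ M, B v x ∈ Set.range (algebraMap O F))
    (hLM : L ≤ M) (hMMd : M ≤ Md) (hMdLd : Md ≤ Ld) :
    moduleLength O (↥Ld ⧸ (L.comap Ld.subtype)) =
      2 • moduleLength O (↥M ⧸ (L.comap M.subtype)) +
        moduleLength O (↥Md ⧸ (M.comap Md.subtype)) := by
  have hB : BilinForm.Nondegenerate B :=
    ⟨hnondeg, fun y hy ↦ hnondeg y fun x ↦ hsymm y x ▸ hy x⟩
  have hB' : BilinForm.IsSymm B := BilinForm.isSymm_def.mpr hsymm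
  obtain rfl : Ld = BilinForm.dualSubmodule B L :=
    Submodule.ext fun v ↦ (hLd v).trans (BilinForm.mem_dualSubmodule_iff_mem_range B).symm
  obtain rfl : Md = BilinForm.dualSubmodule B M :=
    Submodule.ext fun v ↦ (hMd v).trans (BilinForm.mem_dualSubmodule_iff_mem_range B).symm
  have : IsLattice F L := ⟨hLfull.1, hLfull.2⟩
  have hDD (N : Submodule O V) (hLN : L ≤ N) (hN : N ≤ BilinForm.dualSubmodule B L) :
      BilinForm.dualSubmodule B (BilinForm.dualSubmodule B N) = N :=
    have := IsLattice.of_le_of_isLattice_of_fg F hLN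
      ((BilinForm.isLattice_dualSubmodule B hB L).fg.of_le hN)
    BilinForm.dualSubmodule_dualSubmodule_of_isLattice B hB hB' N
  have hdual := Module.length_subquotient_eq_of_orderIso_dual hLM hMdLd
    (Set.Icc.orderIsoDualOfAntitone (BilinForm.dualSubmodule_antitone B) hLM hMMd hDD)
  simp only [moduleLength, ← Module.coe_length]
  rw [Module.length_subquotient_eq_add (hLM.trans hMMd) hMdLd,
    Module.length_subquotient_eq_add hLM hMMd, ← hdual]
  norm_cast
  rw [two_nsmul]
  ac_rfl

/-- For full `O`-lattices `L ⊆ M` in a vector space with a nondegenerate symmetric bilinear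
form, with `M ⊆ M∨ ⊆ L∨`, one has `2·length(M/L) = length(L∨/L) − length(M∨/M)`, i.e.
`length(L∨/L) = 2·length(M/L) + length(M∨/M)`. -/
theorem two_mul_length_eq_length_dual_sub
    {O F V : Type*} [CommRing O] [IsDomain O] [IsDiscreteValuationRing O]
    [Field F] [Algebra O F] [IsFractionRing O F]
    [AddCommGroup V] [Module F V] [FiniteDimensional F V]
    [Module O V] [IsScalarTower O F V]
    (B : V →ₗ[F] V →ₗ[F] F)
    (hsymm : ∀ x y, B x y = B y x)
    (hnondeg : ∀ x, (∀ y, B x y = 0) → x = 0)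
    (L M Ld Md : Submodule O V)
    (hLfull : L.FG ∧ Submodule.span F (L : Set V) = ⊤)
    (hMfull : M.FG ∧ Submodule.span F (M : Set V) = ⊤)
    (hLd : ∀ v : V, v ∈ Ld ↔ ∀ x ∈ L, B v x ∈ Set.range (algebraMap O F))
    (hMd : ∀ v : V, v ∈ Md ↔ ∀ x ∈ M, B v x ∈ Set.range (algebraMap O F))
    (hLM : L ≤ M) (hMMd : M ≤ Md) (hMdLd : Md ≤ Ld) :
    moduleLength O (↥Ld ⧸ (L.comap Ld.subtype)) =
      2 • moduleLength O (↥M ⧸ (L.comap M.subtype)) +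
        moduleLength O (↥Md ⧸ (M.comap Md.subtype)) :=
  two_mul_length_eq_length_dual_sub_general B hsymm hnondeg L M Ld Md hLfull hLd hMd hLM hMMd hMdLd
end

section
/- Let O be a discrete valuation ring with fraction field F, V a finite-dimensional F-vector space with a nondegenerate symmetric F-bilinear form. For full O-lattices L ⊆ M in V, the dual lattices satisfy M∨ ⊆ L∨ and length_O(L∨/M∨) = length_O(M/L). -/
open Module Submodule Set
open LinearMap (BilinForm)

section Length

variable {R : Type*} [Ring R]

theorem moduleLength_congr {M N : Type*} [AddCommGroup M] [Module R M] [AddCommGroup N]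
    [Module R N] (e : M ≃ₗ[R] N) : moduleLength R M = moduleLength R N :=
  Order.krullDim_eq_of_orderIso (Submodule.orderIsoMapComap e)

theorem moduleLength_quotient_congr {V W : Type*} [AddCommGroup V] [Module R V]
    [AddCommGroup W] [Module R W] (φ : V ≃ₗ[R] W) {L M : Submodule R V}
    {L' M' : Submodule R W} (hL : L.map (φ : V →ₗ[R] W) = L')
    (hM : M.map (φ : V →ₗ[R] W) = M') :
    moduleLength R (M ⧸ L.comap M.subtype) = moduleLength R (M' ⧸ L'.comap M'.subtype) := by
  subst hL hM
  refine moduleLength_congr (Submodule.Quotient.equiv _ _ (φ.submoduleMap M) ?_)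
  ext ⟨y, x, hxM, rfl⟩
  simp only [mem_map, mem_comap, subtype_apply, LinearEquiv.coe_coe]
  constructor
  · rintro ⟨⟨a, _⟩, haL, h⟩
    exact ⟨a, haL, congrArg Subtype.val h⟩
  · rintro ⟨a, haL, h⟩
    obtain rfl := φ.injective h
    exact ⟨⟨a, hxM⟩, haL, rfl⟩

end Length

namespace LinearMap.BilinForm

variable {K V : Type*} [Field K] [AddCommGroup V] [Module K V]

theorem dualBasis_unitsSMul {ι : Type*} [DecidableEq ι] [Finite ι] {B : BilinForm K V}
    (hB : B.Nondegenerate) (b : Basis ι K V) (u : ι → Kˣ) :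
    B.dualBasis hB (b.unitsSMul u) = (B.dualBasis hB b).unitsSMul u⁻¹ := by
  refine DFunLike.coe_injective ((dualBasis_eq_iff hB _ _).mpr fun i j => ?_)
  simp only [Basis.unitsSMul_apply, Pi.inv_apply, Units.smul_def, map_smul, LinearMap.smul_apply,
    apply_dualBasis_left, smul_eq_mul]
  split_ifs with h
  · subst h; simp
  · simp

theorem dualSubmodule_antitone_s2 {R : Type*} [CommRing R] [Algebra R K] [Module R V]
    [IsScalarTower R K V] (B : BilinForm K V) : Antitone (B.dualSubmodule (R := R)) :=
  fun _ _ h _ hx y hy => hx y (h hy)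

end LinearMap.BilinForm

theorem Module.Basis.span_range_coe {R V ι : Type*} [Semiring R] [AddCommMonoid V] [Module R V]
    {P : Submodule R V} (b : Basis ι R P) : span R (range fun i => (b i : V)) = P := by
  rw [show (fun i => (b i : V)) = P.subtype ∘ b from rfl, range_comp, ← map_span, b.span_eq,
    Submodule.map_top, range_subtype]

theorem Submodule.IsLattice.exists_stacked_basis {O F V : Type*} [CommRing O] [IsDomain O]
    [IsPrincipalIdealRing O] [Field F] [Algebra O F] [IsFractionRing O F]
    [AddCommGroup V] [Module F V] [Module O V] [IsScalarTower O F V]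
    {L M : Submodule O V} [L.IsLattice F] [M.IsLattice F] (hLM : L ≤ M) :
    ∃ (n : ℕ) (e : Basis (Fin n) F V) (u : Fin n → Fˣ),
      M = span O (range e) ∧ L = span O (range (e.unitsSMul u)) := by
  have hrank : finrank O (L.comap M.subtype) = finrank O M := by
    rw [(comapSubtypeEquivOfLe hLM).finrank_eq, finrank, finrank, IsLattice.rank' F L,
      IsLattice.rank' F M]
  obtain ⟨bM, a, bL, hab⟩ := exists_smith_normal_form_of_rank_eq (finBasis O M) hrank
  have ha : ∀ i, algebraMap O F (a i) ≠ 0 := fun i h => bL.ne_zero i <| by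
    rw [IsFractionRing.to_map_eq_zero_iff] at h
    ext
    simp [hab, h]
  refine ⟨_, bM.extendOfIsLattice F, fun i => Units.mk0 _ (ha i), ?_, ?_⟩
  · rw [show ⇑(bM.extendOfIsLattice F) = fun i => (bM i : V) from
      funext (bM.extendOfIsLattice_apply F), bM.span_range_coe]
  · have hcoe : ⇑((bM.extendOfIsLattice F).unitsSMul fun i => Units.mk0 _ (ha i)) =
        fun i => ((bL i : M) : V) := by
      ext i
      simp [Basis.unitsSMul_apply, hab]
    rw [hcoe, show (fun i => ((bL i : M) : V)) = M.subtype ∘ fun i => (bL i : M) from rfl,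
      range_comp, ← map_span, bL.span_range_coe, map_comap_subtype, inf_eq_right.mpr hLM]

open LinearMap.BilinForm in
theorem length_dual_quotient_eq_length_quotient_general
    {O F V : Type*} [CommRing O] [IsDomain O] [IsDiscreteValuationRing O]
    [Field F] [Algebra O F] [IsFractionRing O F]
    [AddCommGroup V] [Module F V] [FiniteDimensional F V]
    [Module O V] [IsScalarTower O F V]
    (B : V →ₗ[F] V →ₗ[F] F)
    (hnondeg : ∀ x, (∀ y, B x y = 0) → x = 0)
    (L M Ld Md : Submodule O V)
    (hLfull : L.FG ∧ Submodule.span F (L : Set V) = ⊤)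
    (hMfull : M.FG ∧ Submodule.span F (M : Set V) = ⊤)
    (hLd : ∀ v : V, v ∈ Ld ↔ ∀ x ∈ L, B v x ∈ Set.range (algebraMap O F))
    (hMd : ∀ v : V, v ∈ Md ↔ ∀ x ∈ M, B v x ∈ Set.range (algebraMap O F))
    (hLM : L ≤ M) :
    Md ≤ Ld ∧
    moduleLength O (↥Ld ⧸ (Md.comap Ld.subtype)) =
      moduleLength O (↥M ⧸ (L.comap M.subtype)) := by
  have hB : B.Nondegenerate := Nondegenerate.ofSeparatingLeft hnondeg
  have hdual (N D : Submodule O V)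
      (hD : ∀ v, v ∈ D ↔ ∀ x ∈ N, B v x ∈ range (algebraMap O F)) : D = dualSubmodule B N :=
    ext fun v => (hD v).trans <| by simp only [mem_dualSubmodule, Submodule.mem_one, mem_range]
  obtain rfl := hdual L Ld hLd
  obtain rfl := hdual M Md hMd
  refine ⟨dualSubmodule_antitone_s2 B hLM, ?_⟩
  have : L.IsLattice F := ⟨hLfull.1, hLfull.2⟩
  have : M.IsLattice F := ⟨hMfull.1, hMfull.2⟩
  obtain ⟨n, e, u, rfl, rfl⟩ := IsLattice.exists_stacked_basis (F := F) hLM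
  rw [dualSubmodule_span_of_basis B hB, dualSubmodule_span_of_basis B hB, dualBasis_unitsSMul]
  let φ := (e.equiv ((dualBasis B hB e).unitsSMul u⁻¹) (Equiv.refl _)).restrictScalars O
  symm
  apply moduleLength_quotient_congr φ <;> rw [map_span, ← range_comp] <;> congr 2 <;> ext i <;>
    simp [φ, Basis.unitsSMul_apply, Units.smul_def, smul_smul]

/-- For full `O`-lattices `L ⊆ M` in a vector space with a nondegenerate symmetric bilinear
form, the duals satisfy `M∨ ⊆ L∨` and `length(L∨/M∨) = length(M/L)`. -/
theorem length_dual_quotient_eq_length_quotient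
    {O F V : Type*} [CommRing O] [IsDomain O] [IsDiscreteValuationRing O]
    [Field F] [Algebra O F] [IsFractionRing O F]
    [AddCommGroup V] [Module F V] [FiniteDimensional F V]
    [Module O V] [IsScalarTower O F V]
    (B : V →ₗ[F] V →ₗ[F] F)
    (hsymm : ∀ x y, B x y = B y x)
    (hnondeg : ∀ x, (∀ y, B x y = 0) → x = 0)
    (L M Ld Md : Submodule O V)
    (hLfull : L.FG ∧ Submodule.span F (L : Set V) = ⊤)
    (hMfull : M.FG ∧ Submodule.span F (M : Set V) = ⊤)
    (hLd : ∀ v : V, v ∈ Ld ↔ ∀ x ∈ L, B v x ∈ Set.range (algebraMap O F))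
    (hMd : ∀ v : V, v ∈ Md ↔ ∀ x ∈ M, B v x ∈ Set.range (algebraMap O F))
    (hLM : L ≤ M) :
    Md ≤ Ld ∧
    moduleLength O (↥Ld ⧸ (Md.comap Ld.subtype)) =
      moduleLength O (↥M ⧸ (L.comap M.subtype)) :=
  length_dual_quotient_eq_length_quotient_general B hnondeg L M Ld Md hLfull hMfull hLd hMd hLM
end
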